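/- arXiv:1404.5524 — 2 statements merged into one kernel-verified Lean document; each statement's English description precedes it below -/
import Mathlib

section
/- For every x ∈ ℝ^{2n+4}, one has Γ·R(x) = 0 if and only if Ã_κᵗ·Ψ(x) = 0. -/
open Matrix Finset

noncomputable section

/-- The `m`-th (1-based) standard basis vector of `ℝ^(2n+4)`. -/
def E (n : ℕ) (m : ℕ) : Fin (2*n+4) → ℝ := fun j => if (j : ℕ) + 1 = m then 1 else 0

/-- The value of a vector `x ∈ ℝ^(2n+4)` at the (1-based) math index `m`. -/
def X (n : ℕ) (x : Fin (2*n+4) → ℝ) (m : ℕ) : ℝ :=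
  if h : m - 1 < 2*n+4 then x ⟨m - 1, h⟩ else 0

/-- The stoichiometric matrix `Γ` of the processive `n`-site phosphorylation network;
columns are indexed 1-based as in the paper. -/
def Gamma (n : ℕ) : Matrix (Fin (2*n+4)) (Fin (2*n+2)) ℝ :=
  Matrix.of fun r c0 =>
    (let c := (c0 : ℕ) + 1
     if c = 1 then E n 5 - E n 1 - E n 3
     else if c ≤ n then E n (2*(c-1)+5) - E n (2*(c-1)+3)
     else if c = n+1 then E n 1 + E n 4 - E n (2*n+3)
     else if c = n+2 then E n (2*n+4) - E n 2 - E n 4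
     else if c ≤ 2*n+1 then E n (2*n+4-2*(c-(n+2))) - E n (2*n+6-2*(c-(n+2)))
     else E n 2 + E n 3 - E n 6) r

/-- The mass-action reaction rate function `R : ℝ^(2n+4) → ℝ^(2n+2)` of the processive
`n`-site phosphorylation network (coordinates indexed 1-based). -/
def Rvec (n : ℕ) (k l : ℕ → ℝ) (x : Fin (2*n+4) → ℝ) : Fin (2*n+2) → ℝ := fun a0 =>
  let a := (a0 : ℕ) + 1
  if a = 1 then k 1 * X n x 1 * X n x 3 - k 2 * X n x 5
  else if a ≤ n then
    k (2*(a-1)+1) * X n x (2*(a-1)+3) - k (2*(a-1)+2) * X n x (2*(a-1)+5)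
  else if a = n+1 then k (2*n+1) * X n x (2*n+3)
  else if a = n+2 then l (2*n+1) * X n x 2 * X n x 4 - l (2*n) * X n x (2*n+4)
  else if a ≤ 2*n+1 then
    l (2*(n-(a-(n+2)))+1) * X n x (2*(n-(a-(n+2)))+6)
      - l (2*(n-(a-(n+2)))) * X n x (2*(n-(a-(n+2)))+4)
  else l 1 * X n x 6

/-- The label of the edge `a → b` (nodes 1-based in `{1, …, 2n+2}`) in the labeled digraph
underlying the translated processive network; `0` if there is no such edge. -/
def lab (n : ℕ) (k l : ℕ → ℝ) (a b : ℕ) : ℝ :=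
  if 1 ≤ a ∧ a ≤ n ∧ b = a+1 then k (2*a-1)
  else if 1 ≤ b ∧ b ≤ n ∧ a = b+1 then k (2*b)
  else if a = n+1 ∧ b = n+2 then k (2*n+1)
  else if n+2 ≤ a ∧ a ≤ 2*n+1 ∧ b = a+1 then l (2*(n+1-(a-(n+1)))+1)
  else if n+3 ≤ a ∧ a ≤ 2*n+2 ∧ b+1 = a then l (2*(n+1-(a-(n+2))))
  else if a = 2*n+2 ∧ b = 1 then l 1
  else 0

/-- The matrix `Ã_κᵗ` of the translated processive network: for `j ≠ i` the `(j,i)` entry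
is the label of the edge `i → j` (or `0`), and the `(i,i)` entry is minus the sum of the
labels of all edges leaving node `i`. -/
def Atilde (n : ℕ) (k l : ℕ → ℝ) : Matrix (Fin (2*n+2)) (Fin (2*n+2)) ℝ :=
  Matrix.of fun j i =>
    if j = i then -(∑ b ∈ Finset.range (2*n+3), lab n k l ((i : ℕ)+1) b)
    else lab n k l ((i : ℕ)+1) ((j : ℕ)+1)

/-- The monomial map `Ψ : ℝ^(2n+4) → ℝ^(2n+2)` of the translated processive network
(coordinates indexed 1-based). -/
def Psi (n : ℕ) (x : Fin (2*n+4) → ℝ) : Fin (2*n+2) → ℝ := fun a0 =>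
  let a := (a0 : ℕ) + 1
  if a = 1 then X n x 1 * X n x 3
  else if a ≤ n+1 then X n x (2*a+1)
  else if a = n+2 then X n x 2 * X n x 4
  else X n x (2*n+6-2*(a-(n+2)))

/-! The reactions form one cycle `1 → 2 → ⋯ → 2n+2 → 1`, reaction `a` carrying the net flux
`R_a(x)`. The matrix `Ã_κᵗ` is the Laplacian of this cycle, so `(Ã_κᵗ Ψ(x))_j = R_{j-1}(x) - R_j(x)`,
which vanishes for all `j` iff all fluxes are equal. On the other side, every species is produced
by exactly one reaction and consumed by exactly one, so `(Γ R)_s = R_{prod s} - R_{cons s}`; since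
the pairs `(prod s, cons s)` link every reaction `a` to `a + 1`, also `Γ R = 0` iff all fluxes are
equal. -/

section DigraphLaplacian

variable {m : ℕ}

def digraphLaplacian (w : Fin m → Fin m → ℝ) : Matrix (Fin m) (Fin m) ℝ :=
  Matrix.of fun j i => if j = i then -∑ b, w i b else w i j

def edgeFlux [NeZero m] (w : Fin m → Fin m → ℝ) (ψ : Fin m → ℝ) (e : Fin m) : ℝ :=
  w e (e + 1) * ψ e - w (e + 1) e * ψ (e + 1)

theorem digraphLaplacian_mulVec_apply {w : Fin m → Fin m → ℝ} {j : Fin m} (hjj : w j j = 0)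
    (ψ : Fin m → ℝ) :
    (digraphLaplacian w *ᵥ ψ) j = ∑ i, w i j * ψ i - (∑ b, w j b) * ψ j := by
  have hterm : ∀ i, digraphLaplacian w j i * ψ i
      = w i j * ψ i - if i = j then (∑ b, w j b) * ψ j else 0 := by
    intro i
    by_cases h : i = j
    · subst h; simp [digraphLaplacian, hjj]
    · simp [digraphLaplacian, h, Ne.symm h]
  simp only [mulVec, dotProduct, hterm, Finset.sum_sub_distrib, Finset.sum_ite_eq',
    Finset.mem_univ, if_true]

theorem Fin.one_add_one_ne_zero [NeZero m] (hm : 3 ≤ m) : (1 + 1 : Fin m) ≠ 0 := by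
  have h1 : 1 % m = 1 := Nat.mod_eq_of_lt (by omega)
  rw [Ne, Fin.ext_iff, Fin.val_add, Fin.val_one', h1, Fin.val_zero, Nat.mod_eq_of_lt (by omega)]
  omega

theorem digraphLaplacian_mulVec_apply_of_cycle [NeZero m] (hm : 3 ≤ m)
    {w : Fin m → Fin m → ℝ} (hw : ∀ i j, j ≠ i + 1 → i ≠ j + 1 → w i j = 0)
    (ψ : Fin m → ℝ) (j : Fin m) :
    (digraphLaplacian w *ᵥ ψ) j = edgeFlux w ψ (j - 1) - edgeFlux w ψ j := by
  have hne : j - 1 ≠ j + 1 := fun h => Fin.one_add_one_ne_zero hm <|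
    calc (1 + 1 : Fin m) = (j + 1) - (j - 1) := by abel
      _ = 0 := by rw [h, sub_self]
  have hself : j ≠ j + 1 := fun h => hne (by rw [← h, sub_eq_self]; exact left_eq_add.mp h)
  have ne_sub {i : Fin m} (h : i ≠ j - 1) : j ≠ i + 1 := fun h' => h (eq_sub_of_add_eq h'.symm)
  rw [digraphLaplacian_mulVec_apply (hw j j hself hself),
    Fintype.sum_eq_add (j - 1) (j + 1) hne
      (fun i hi => by rw [hw i j (ne_sub hi.1) hi.2, zero_mul]),
    Fintype.sum_eq_add (j + 1) (j - 1) hne.symm (fun b hb => hw j b hb.1 (ne_sub hb.2)),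
    edgeFlux, edgeFlux, sub_add_cancel]
  ring

end DigraphLaplacian

theorem Fin.apply_eq_apply_zero_of_castSucc_eq_succ {α : Type*} {m : ℕ} {f : Fin (m + 1) → α}
    (h : ∀ i : Fin m, f i.castSucc = f i.succ) (i : Fin (m + 1)) : f i = f 0 :=
  Fin.induction rfl (fun i hi => (h i).symm.trans hi) i

theorem Fin.forall_apply_sub_one_eq_iff {α : Type*} {m : ℕ} {f : Fin (m + 1) → α} :
    (∀ j, f (j - 1) = f j) ↔ ∀ i, f i = f 0 := by
  refine ⟨fun h => Fin.apply_eq_apply_zero_of_castSucc_eq_succ fun i => ?_,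
    fun h j => by rw [h, h j]⟩
  rw [← h i.succ, ← Fin.coeSucc_eq_succ, add_sub_cancel_right]

theorem Fin.eq_add_one_of_val_eq {m : ℕ} {i j : Fin (m + 1)}
    (h : (j : ℕ) = i + 1 ∨ ((i : ℕ) = m ∧ (j : ℕ) = 0)) : j = i + 1 := by
  rcases h with h | ⟨hi, hj⟩
  · ext; rw [Fin.val_add_one, if_neg (fun hl => by rw [hl, Fin.val_last] at h; omega), h]
  · ext; rw [Fin.val_add_one, if_pos (Fin.ext (by rw [hi, Fin.val_last])), hj]

/-- Numbering species and reactions from `0`, species `r` is produced only by reaction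
`producer n r` and consumed only by reaction `consumer n r`. -/
def producer (n : ℕ) (r : Fin (2*n+4)) : Fin (2*n+2) :=
  if r.val = 0 ∨ r.val = 3 then ⟨n, by omega⟩
  else if r.val ≤ 2 then ⟨2*n+1, by omega⟩
  else if r.val % 2 = 0 then ⟨r.val/2 - 2, by have := r.isLt; omega⟩
  else ⟨2*n - (r.val - 5)/2, by omega⟩

def consumer (n : ℕ) (r : Fin (2*n+4)) : Fin (2*n+2) :=
  if r.val = 0 ∨ r.val = 2 then ⟨0, by omega⟩
  else if r.val ≤ 3 then ⟨n+1, by omega⟩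
  else if r.val % 2 = 0 then ⟨r.val/2 - 1, by have := r.isLt; omega⟩
  else ⟨2*n + 1 - (r.val - 5)/2, by omega⟩

theorem E_apply (n m : ℕ) (r : Fin (2*n+4)) : E n m r = if (r : ℕ) + 1 = m then 1 else 0 := rfl

set_option maxHeartbeats 1000000 in
theorem Gamma_apply {n : ℕ} (hn : 1 ≤ n) (r : Fin (2*n+4)) (c : Fin (2*n+2)) :
    Gamma n r c = (if c = producer n r then 1 else 0) - (if c = consumer n r then 1 else 0) := by
  have hc := c.isLt
  have hr := r.isLt
  simp only [Gamma, of_apply, producer, consumer, Fin.ext_iff, apply_ite Fin.val]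
  rcases (by omega : r.val = 0 ∨ r.val = 1 ∨ r.val = 2 ∨ r.val = 3 ∨
      (4 ≤ r.val ∧ r.val % 2 = 0) ∨ (5 ≤ r.val ∧ r.val % 2 = 1)) with h | h | h | h | h | h <;>
  · simp (disch := omega) only [if_pos, if_neg]
    split_ifs <;> simp only [Pi.sub_apply, Pi.add_apply, E_apply] <;> split_ifs <;>
      first | (exfalso; omega) | norm_num

theorem Gamma_mulVec_apply {n : ℕ} (hn : 1 ≤ n) (f : Fin (2*n+2) → ℝ) (r : Fin (2*n+4)) :
    (Gamma n *ᵥ f) r = f (producer n r) - f (consumer n r) := by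
  simp only [mulVec, dotProduct, Gamma_apply hn, sub_mul, ite_mul, one_mul, zero_mul,
    Finset.sum_sub_distrib, Finset.sum_ite_eq', Finset.mem_univ, if_true]

theorem exists_producer_consumer (n : ℕ) (i : Fin (2*n+1)) :
    ∃ r, producer n r = i.castSucc ∧ consumer n r = i.succ := by
  have hi := i.isLt
  refine ⟨⟨if (i : ℕ) < n then 2 * i + 4 else if (i : ℕ) = n then 3 else 4 * n + 5 - 2 * i,
    by split_ifs <;> omega⟩, ?_, ?_⟩ <;>
  · ext
    rcases lt_trichotomy (i : ℕ) n with h | h | h <;>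
      simp (disch := omega) only [producer, consumer, or_true, if_true, if_pos, if_neg,
        Fin.val_castSucc, Fin.val_succ] <;> omega

theorem Gamma_mulVec_eq_zero_iff {n : ℕ} (hn : 1 ≤ n) (f : Fin (2*n+2) → ℝ) :
    Gamma n *ᵥ f = 0 ↔ ∀ i, f i = f 0 := by
  refine ⟨fun h => Fin.apply_eq_apply_zero_of_castSucc_eq_succ fun i => ?_, fun h => ?_⟩
  · obtain ⟨r, hp, hc⟩ := exists_producer_consumer n i
    rw [← hp, ← hc, ← sub_eq_zero, ← Gamma_mulVec_apply hn, h, Pi.zero_apply]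
  · ext r
    rw [Gamma_mulVec_apply hn, h, h (consumer n r), sub_self, Pi.zero_apply]

theorem lab_zero_right (n : ℕ) (k l : ℕ → ℝ) (a : ℕ) : lab n k l a 0 = 0 := by
  simp (disch := omega) only [lab, if_neg]

theorem lab_eq_zero_of_not_adjacent (n : ℕ) (k l : ℕ → ℝ) {i j : Fin (2*n+2)}
    (hij : j ≠ i + 1) (hji : i ≠ j + 1) : lab n k l (i + 1) (j + 1) = 0 := by
  have hij' := mt Fin.eq_add_one_of_val_eq hij
  have hji' := mt Fin.eq_add_one_of_val_eq hji
  simp (disch := omega) only [lab, if_neg]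

theorem Atilde_eq_digraphLaplacian (n : ℕ) (k l : ℕ → ℝ) :
    Atilde n k l = digraphLaplacian fun i j => lab n k l (i + 1) (j + 1) := by
  ext j i
  simp only [Atilde, digraphLaplacian, of_apply, Finset.sum_range_succ', lab_zero_right,
    add_zero, Fin.sum_univ_eq_sum_range (fun b => lab n k l (i + 1) (b + 1))]

theorem edgeFlux_lab_Psi {n : ℕ} (hn : 1 ≤ n) (k l : ℕ → ℝ) (x : Fin (2*n+4) → ℝ)
    (e : Fin (2*n+2)) :
    edgeFlux (fun i j => lab n k l (i + 1) (j + 1)) (Psi n x) e = Rvec n k l x e := by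
  have he := e.isLt
  have hsucc : ((e + 1 : Fin (2*n+2)) : ℕ) = if (e : ℕ) = 2*n+1 then 0 else (e : ℕ) + 1 := by
    rw [Fin.val_add_one]; simp only [Fin.ext_iff, Fin.val_last]
  simp only [edgeFlux, Psi, Rvec, lab]
  rcases (by omega : e.val = 0 ∨ (1 ≤ e.val ∧ e.val < n) ∨ e.val = n ∨ e.val = n+1 ∨
      (n+2 ≤ e.val ∧ e.val ≤ 2*n) ∨ e.val = 2*n+1) with h | h | h | h | h | h <;>
  · simp (disch := omega) only [if_pos, if_neg] at hsucc
    simp (disch := omega) only [hsucc, and_true, if_true, if_pos, if_neg, zero_mul, sub_zero,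
      mul_assoc]
    -- the two sides now agree up to arithmetic on the indices of `k`, `l` and `X`
    congr! 2 <;> first | rfl | omega | (congr 1; omega)

theorem Atilde_mulVec_Psi_apply {n : ℕ} (hn : 1 ≤ n) (k l : ℕ → ℝ) (x : Fin (2*n+4) → ℝ)
    (j : Fin (2*n+2)) :
    (Atilde n k l *ᵥ Psi n x) j = Rvec n k l x (j - 1) - Rvec n k l x j := by
  rw [Atilde_eq_digraphLaplacian, digraphLaplacian_mulVec_apply_of_cycle (by omega)
    (fun _ _ => lab_eq_zero_of_not_adjacent n k l), edgeFlux_lab_Psi hn, edgeFlux_lab_Psi hn]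

theorem steady_state_iff_kernel_general (n : ℕ) (hn : 1 ≤ n) (k l : ℕ → ℝ) :
    ∀ x : Fin (2*n+4) → ℝ,
      (Gamma n).mulVec (Rvec n k l x) = 0 ↔ (Atilde n k l).mulVec (Psi n x) = 0 := by
  intro x
  rw [Gamma_mulVec_eq_zero_iff hn, ← Fin.forall_apply_sub_one_eq_iff, funext_iff]
  simp only [Atilde_mulVec_Psi_apply hn, Pi.zero_apply, sub_eq_zero]

/-- For every `x ∈ ℝ^(2n+4)`, one has `Γ·R(x) = 0` if and only if `Ã_κᵗ·Ψ(x) = 0`. -/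
theorem steady_state_iff_kernel (n : ℕ) (hn : 1 ≤ n) (k l : ℕ → ℝ)
    (hk : ∀ i, 1 ≤ i → i ≤ 2*n+1 → 0 < k i)
    (hl : ∀ i, 1 ≤ i → i ≤ 2*n+1 → 0 < l i) :
    ∀ x : Fin (2*n+4) → ℝ,
      (Gamma n).mulVec (Rvec n k l x) = 0 ↔ (Atilde n k l).mulVec (Psi n x) = 0 :=
  steady_state_iff_kernel_general n hn k l

end
end

section
/- Suppose a ∈ ℝ^{2n+4} has all coordinates strictly positive and is a steady state (Γ·R(a) = 0). Then a vector b ∈ ℝ^{2n+4} with all coordinates strictly positive is a steady state if and only if the vector (ln b₁ − ln a₁, …, ln b_{2n+4} − ln a_{2n+4}) lies in the column space of the matrix B. -/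
/-! Consecutive reactions of the network share a species that the first produces, the second
consumes and no other reaction touches, so at a steady state all reaction rates are equal.
Hence two positive steady states have proportional rate vectors, `R b = T • R a` with `T > 0`.
Since the rate constants are positive, this is equivalent (walking along the two chains of the
network) to every reactant monomial `x₁x₃`, `x₂x₄`, `x₅`, …, `x_{2n+4}` of `b` being `T` times
that of `a`. With `t = log T`, taking logarithms turns these conditions into
`ln b - ln a = B (ln b₂ - ln a₂, ln b₃ - ln a₃, t)`, and they are exactly the equations cutting out
the column space of `B`. -/

open Matrix Finset

noncomputable section

/-- The `(2n+4) × 3` matrix `B` whose columns are `e₂ - e₄`, `e₃ - e₁` and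
`e₁ + e₄ + e₅ + ⋯ + e_{2n+4}` (rows indexed 1-based). -/
def Bmat (n : ℕ) : Matrix (Fin (2*n+4)) (Fin 3) ℝ :=
  Matrix.of fun r c =>
    let m := (r : ℕ) + 1
    if (c : ℕ) = 0 then (if m = 2 then (1:ℝ) else if m = 4 then -1 else 0)
    else if (c : ℕ) = 1 then (if m = 3 then 1 else if m = 1 then -1 else 0)
    else (if m = 2 ∨ m = 3 then 0 else 1)


lemma X_succ (n : ℕ) (x : Fin (2*n+4) → ℝ) (i : Fin (2*n+4)) : X n x (i + 1) = x i := by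
  simp [X]

lemma X_eq_apply {n m : ℕ} (x : Fin (2*n+4) → ℝ) (h1 : 1 ≤ m) (h2 : m ≤ 2*n+4) :
    X n x m = x ⟨m - 1, by omega⟩ := by
  rw [X, dif_pos]

lemma X_pos {n m : ℕ} {x : Fin (2*n+4) → ℝ} (hx : ∀ i, 0 < x i) (h1 : 1 ≤ m) (h2 : m ≤ 2*n+4) :
    0 < X n x m :=
  X_eq_apply x h1 h2 ▸ hx _

lemma eq_of_mulVec_eq_zero_of_row_eq {ι κ R : Type*} [Fintype κ] [DecidableEq κ] [CommRing R]
    {M : Matrix ι κ R} {v : κ → R} (hv : M *ᵥ v = 0) {r : ι} {p q : κ}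
    (hr : M r = Pi.single p 1 - Pi.single q 1) : v p = v q := by
  have h := congrFun hv r
  simp only [mulVec, hr, sub_dotProduct, single_one_dotProduct, Pi.zero_apply] at h
  exact sub_eq_zero.mp h

lemma exists_Gamma_row_eq (n : ℕ) (hn : 1 ≤ n) (p : ℕ) (hp : p + 1 < 2*n+2) :
    ∃ r, Gamma n r = Pi.single ⟨p, by omega⟩ 1 - Pi.single ⟨p + 1, hp⟩ 1 := by
  -- `r` is the species linking reactions `p+1` and `p+2`: `x_{2p+5}`, `x₄` or `x_{4n-2p+6}`.
  obtain ⟨r, hr⟩ : ∃ r : Fin (2*n+4), p < n ∧ (r : ℕ) = 2*p+4 ∨ p = n ∧ (r : ℕ) = 3 ∨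
      n < p ∧ (r : ℕ) = 4*n-2*p+5 := by
    rcases lt_trichotomy p n with h | h | h
    · exact ⟨⟨2*p+4, by omega⟩, Or.inl ⟨h, rfl⟩⟩
    · exact ⟨⟨3, by omega⟩, Or.inr (Or.inl ⟨h, rfl⟩)⟩
    · exact ⟨⟨4*n-2*p+5, by omega⟩, Or.inr (Or.inr ⟨h, rfl⟩)⟩
  refine ⟨r, funext fun c => ?_⟩
  have := c.isLt
  simp only [Gamma, Matrix.of_apply, E, Pi.add_apply, Pi.sub_apply, ite_apply, Pi.single_apply,
    Fin.ext_iff]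
  split_ifs <;> first | omega | norm_num

lemma eq_of_Gamma_mulVec_eq_zero {n : ℕ} (hn : 1 ≤ n) {v : Fin (2*n+2) → ℝ}
    (hv : Gamma n *ᵥ v = 0) (c c' : Fin (2*n+2)) : v c = v c' := by
  have step (p : ℕ) (hp : p + 1 < 2*n+2) : v ⟨p, by omega⟩ = v ⟨p + 1, hp⟩ :=
    have ⟨_, hr⟩ := exists_Gamma_row_eq n hn p hp
    eq_of_mulVec_eq_zero_of_row_eq hv hr
  have eq_zero (q : ℕ) (hq : q < 2*n+2) : v ⟨q, hq⟩ = v ⟨0, by omega⟩ := by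
    induction q with
    | zero => rfl
    | succ q ih => rw [← step q hq, ih]
  rw [eq_zero c c.isLt, eq_zero c' c'.isLt]

section Rvec

variable {n : ℕ} {k l : ℕ → ℝ} {x : Fin (2*n+4) → ℝ}

lemma Rvec_apply_zero : Rvec n k l x ⟨0, by omega⟩ = k 1 * X n x 1 * X n x 3 - k 2 * X n x 5 := by
  simp [Rvec]

lemma Rvec_apply_of_lt {i : ℕ} (h1 : 1 ≤ i) (h2 : i < n) :
    Rvec n k l x ⟨i, by omega⟩ = k (2*i+1) * X n x (2*i+3) - k (2*i+2) * X n x (2*i+5) := by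
  simp only [Rvec]
  rw [if_neg (by omega), if_pos (by omega), Nat.add_sub_cancel]

lemma Rvec_apply_n (hn : 1 ≤ n) : Rvec n k l x ⟨n, by omega⟩ = k (2*n+1) * X n x (2*n+3) := by
  simp only [Rvec]
  rw [if_neg (by omega), if_neg (by omega), if_pos trivial]

lemma Rvec_apply_n_add_one :
    Rvec n k l x ⟨n+1, by omega⟩ = l (2*n+1) * X n x 2 * X n x 4 - l (2*n) * X n x (2*n+4) := by
  simp only [Rvec]
  rw [if_neg (by omega), if_neg (by omega), if_neg (by omega), if_pos trivial]

lemma Rvec_apply_two_mul_n_add_one_sub {j : ℕ} (h1 : 1 ≤ j) (h2 : j < n) :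
    Rvec n k l x ⟨2*n+1-j, by omega⟩ =
      l (2*j+1) * X n x (2*j+6) - l (2*j) * X n x (2*j+4) := by
  simp only [Rvec]
  rw [if_neg (by omega), if_neg (by omega), if_neg (by omega), if_neg (by omega),
    if_pos (by omega), show n - (2*n+1-j+1-(n+2)) = j by omega]

lemma Rvec_apply_last (hn : 1 ≤ n) : Rvec n k l x ⟨2*n+1, by omega⟩ = l 1 * X n x 6 := by
  simp only [Rvec]
  rw [if_neg (by omega), if_neg (by omega), if_neg (by omega), if_neg (by omega),
    if_neg (by omega)]

end Rvec

def ReactantMonomialsScale (n : ℕ) (T : ℝ) (a b : Fin (2*n+4) → ℝ) : Prop :=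
  X n b 1 * X n b 3 = T * (X n a 1 * X n a 3) ∧ X n b 2 * X n b 4 = T * (X n a 2 * X n a 4) ∧
    ∀ m, 5 ≤ m → m ≤ 2*n+4 → X n b m = T * X n a m

section Scaling

variable {n : ℕ} {k l : ℕ → ℝ} {a b : Fin (2*n+4) → ℝ} {T : ℝ}

lemma Rvec_eq_smul_of_reactantMonomialsScale (hn : 1 ≤ n) (h : ReactantMonomialsScale n T a b) :
    Rvec n k l b = T • Rvec n k l a := by
  obtain ⟨h13, h24, hX⟩ := h
  funext c
  have hc := c.isLt
  simp only [Rvec, Nat.add_sub_cancel, Pi.smul_apply, smul_eq_mul]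
  split_ifs
  · linear_combination k 1 * h13 - k 2 * hX 5 (by omega) (by omega)
  · linear_combination k (2*c+1) * hX (2*c+3) (by omega) (by omega)
      - k (2*c+2) * hX (2*c+5) (by omega) (by omega)
  · linear_combination k (2*n+1) * hX (2*n+3) (by omega) (by omega)
  · linear_combination l (2*n+1) * h24 - l (2*n) * hX (2*n+4) (by omega) (by omega)
  · linear_combination l (2*(n-(c+1-(n+2)))+1) * hX (2*(n-(c+1-(n+2)))+6) (by omega) (by omega)
      - l (2*(n-(c+1-(n+2)))) * hX (2*(n-(c+1-(n+2)))+4) (by omega) (by omega)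
  · linear_combination l 1 * hX 6 (by omega) (by omega)

lemma X_odd_eq_mul_of_Rvec_eq_smul (hn : 1 ≤ n) (hk : ∀ i, 1 ≤ i → i ≤ 2*n+1 → 0 < k i)
    (hR : Rvec n k l b = T • Rvec n k l a) (d : ℕ) (hd : d < n) :
    X n b (2*(n-d)+3) = T * X n a (2*(n-d)+3) := by
  induction d with
  | zero =>
    have h := congrFun hR ⟨n, by omega⟩
    rw [Pi.smul_apply, Rvec_apply_n hn, Rvec_apply_n hn] at h
    apply mul_left_cancel₀ (hk (2*n+1) (by omega) le_rfl).ne'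
    linear_combination h
  | succ d ih =>
    have h := congrFun hR ⟨n-(d+1), by omega⟩
    rw [Pi.smul_apply, Rvec_apply_of_lt (by omega) (by omega),
      Rvec_apply_of_lt (by omega) (by omega), show 2*(n-(d+1))+5 = 2*(n-d)+3 by omega] at h
    apply mul_left_cancel₀ (hk (2*(n-(d+1))+1) (by omega) (by omega)).ne'
    linear_combination h + k (2*(n-(d+1))+2) * ih (by omega)

lemma X_even_eq_mul_of_Rvec_eq_smul (hn : 1 ≤ n) (hl : ∀ i, 1 ≤ i → i ≤ 2*n+1 → 0 < l i)
    (hR : Rvec n k l b = T • Rvec n k l a) (j : ℕ) (hj : j < n) :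
    X n b (2*j+6) = T * X n a (2*j+6) := by
  induction j with
  | zero =>
    have h := congrFun hR ⟨2*n+1, by omega⟩
    rw [Pi.smul_apply, Rvec_apply_last hn, Rvec_apply_last hn] at h
    apply mul_left_cancel₀ (hl 1 le_rfl (by omega)).ne'
    linear_combination h
  | succ j ih =>
    have h := congrFun hR ⟨2*n+1-(j+1), by omega⟩
    rw [Pi.smul_apply, Rvec_apply_two_mul_n_add_one_sub (by omega) hj,
      Rvec_apply_two_mul_n_add_one_sub (by omega) hj,
      show 2*(j+1)+4 = 2*j+6 by omega] at h
    apply mul_left_cancel₀ (hl (2*(j+1)+1) (by omega) (by omega)).ne'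
    linear_combination h + l (2*(j+1)) * ih (by omega)

lemma reactantMonomialsScale_of_Rvec_eq_smul (hn : 1 ≤ n)
    (hk : ∀ i, 1 ≤ i → i ≤ 2*n+1 → 0 < k i) (hl : ∀ i, 1 ≤ i → i ≤ 2*n+1 → 0 < l i)
    (hR : Rvec n k l b = T • Rvec n k l a) : ReactantMonomialsScale n T a b := by
  have hX (m : ℕ) (h5 : 5 ≤ m) (hm : m ≤ 2*n+4) : X n b m = T * X n a m := by
    obtain ⟨u, rfl | rfl⟩ := Nat.even_or_odd' m
    · simpa [show 2*(u-3)+6 = 2*u by omega] using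
        X_even_eq_mul_of_Rvec_eq_smul hn hl hR (u-3) (by omega)
    · simpa [show 2*(n-(n+1-u))+3 = 2*u+1 by omega] using
        X_odd_eq_mul_of_Rvec_eq_smul hn hk hR (n+1-u) (by omega)
  refine ⟨?_, ?_, hX⟩
  · have h := congrFun hR ⟨0, by omega⟩
    rw [Pi.smul_apply, Rvec_apply_zero, Rvec_apply_zero] at h
    apply mul_left_cancel₀ (hk 1 le_rfl (by omega)).ne'
    linear_combination h + k 2 * hX 5 le_rfl (by omega)
  · have h := congrFun hR ⟨n+1, by omega⟩
    rw [Pi.smul_apply, Rvec_apply_n_add_one, Rvec_apply_n_add_one] at h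
    apply mul_left_cancel₀ (hl (2*n+1) (by omega) le_rfl).ne'
    linear_combination h + l (2*n) * hX (2*n+4) (by omega) le_rfl

end Scaling

lemma Rvec_eq_smul_iff {n : ℕ} {k l : ℕ → ℝ} {a b : Fin (2*n+4) → ℝ} {T : ℝ} (hn : 1 ≤ n)
    (hk : ∀ i, 1 ≤ i → i ≤ 2*n+1 → 0 < k i) (hl : ∀ i, 1 ≤ i → i ≤ 2*n+1 → 0 < l i) :
    Rvec n k l b = T • Rvec n k l a ↔ ReactantMonomialsScale n T a b :=
  ⟨reactantMonomialsScale_of_Rvec_eq_smul hn hk hl, Rvec_eq_smul_of_reactantMonomialsScale hn⟩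

lemma Bmat_mulVec_apply {n : ℕ} (y : Fin 3 → ℝ) (i : Fin (2*n+4)) :
    (Bmat n *ᵥ y) i = if (i : ℕ) = 0 then y 2 - y 1 else if (i : ℕ) = 1 then y 0
      else if (i : ℕ) = 2 then y 1 else if (i : ℕ) = 3 then y 2 - y 0 else y 2 := by
  simp only [mulVec, dotProduct, Fin.sum_univ_three, Bmat, Matrix.of_apply, Fin.isValue,
    Fin.val_zero, Fin.val_one, Fin.val_two, if_true, one_ne_zero, OfNat.ofNat_ne_zero,
    OfNat.ofNat_ne_one, if_false, Nat.reduceEqDiff]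
  split_ifs <;> first | omega | ring

lemma mem_range_Bmat_iff {n : ℕ} (v : Fin (2*n+4) → ℝ) :
    v ∈ LinearMap.range (mulVecLin (Bmat n)) ↔ ∃ t, X n v 1 + X n v 3 = t ∧
      X n v 2 + X n v 4 = t ∧ ∀ m, 5 ≤ m → m ≤ 2*n+4 → X n v m = t := by
  constructor
  · rintro ⟨y, rfl⟩
    rw [mulVecLin_apply]
    refine ⟨y 2, ?_, ?_, fun m h5 hm => ?_⟩
    · rw [X_eq_apply _ le_rfl (by omega), X_eq_apply _ (by omega) (by omega)]
      simp [Bmat_mulVec_apply]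
    · rw [X_eq_apply _ (by omega) (by omega), X_eq_apply _ (by omega) (by omega)]
      simp [Bmat_mulVec_apply]
    · rw [X_eq_apply _ (by omega) hm, Bmat_mulVec_apply]
      dsimp only
      rw [if_neg (by omega), if_neg (by omega), if_neg (by omega), if_neg (by omega)]
  · rintro ⟨t, h13, h24, hX⟩
    refine ⟨![X n v 2, X n v 3, t], funext fun i => ?_⟩
    rw [mulVecLin_apply, ← X_succ n v i, Bmat_mulVec_apply]
    simp only [Matrix.cons_val_zero, Matrix.cons_val_one, Matrix.cons_val_two, Matrix.head_cons,
      Matrix.tail_cons]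
    have := i.isLt
    split_ifs with g1 g2 g3 g4
    · rw [g1]; linarith
    · rw [g2]
    · rw [g3]
    · rw [g4]; linarith
    · exact (hX _ (by omega) (by omega)).symm

lemma Rvec_apply_n_pos {n : ℕ} (hn : 1 ≤ n) {k l : ℕ → ℝ} (hk : 0 < k (2*n+1))
    {x : Fin (2*n+4) → ℝ} (hx : ∀ i, 0 < x i) : 0 < Rvec n k l x ⟨n, by omega⟩ := by
  rw [Rvec_apply_n hn]
  exact mul_pos hk (X_pos hx (by omega) (by omega))

lemma Gamma_mulVec_Rvec_eq_zero_iff {n : ℕ} (hn : 1 ≤ n) {k l : ℕ → ℝ} (hk : 0 < k (2*n+1))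
    {a b : Fin (2*n+4) → ℝ} (ha : ∀ i, 0 < a i) (hass : Gamma n *ᵥ Rvec n k l a = 0)
    (hb : ∀ i, 0 < b i) :
    Gamma n *ᵥ Rvec n k l b = 0 ↔ ∃ t, Rvec n k l b = Real.exp t • Rvec n k l a := by
  constructor
  · intro hbss
    have hca := Rvec_apply_n_pos hn hk (l := l) ha
    have hcb := Rvec_apply_n_pos hn hk (l := l) hb
    refine ⟨Real.log (Rvec n k l b ⟨n, by omega⟩ / Rvec n k l a ⟨n, by omega⟩),
      funext fun c => ?_⟩
    rw [Pi.smul_apply, smul_eq_mul, Real.exp_log (div_pos hcb hca),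
      eq_of_Gamma_mulVec_eq_zero hn hbss c ⟨n, by omega⟩,
      eq_of_Gamma_mulVec_eq_zero hn hass c ⟨n, by omega⟩, div_mul_cancel₀ _ hca.ne']
  · rintro ⟨t, h⟩
    rw [h, mulVec_smul, hass, smul_zero]

lemma eq_exp_mul_iff_log_sub_eq {p q t : ℝ} (hp : 0 < p) (hq : 0 < q) :
    p = Real.exp t * q ↔ Real.log p - Real.log q = t := by
  constructor
  · rintro rfl
    rw [Real.log_mul (Real.exp_pos t).ne' hq.ne', Real.log_exp, add_sub_cancel_right]
  · rintro rfl
    rw [Real.exp_sub, Real.exp_log hp, Real.exp_log hq, div_mul_cancel₀ _ hq.ne']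

lemma mul_eq_exp_mul_mul_iff {p p' q q' t : ℝ} (hp : 0 < p) (hp' : 0 < p') (hq : 0 < q)
    (hq' : 0 < q') :
    p * p' = Real.exp t * (q * q') ↔ Real.log p - Real.log q + (Real.log p' - Real.log q') = t := by
  rw [eq_exp_mul_iff_log_sub_eq (mul_pos hp hp') (mul_pos hq hq'), Real.log_mul hp.ne' hp'.ne',
    Real.log_mul hq.ne' hq'.ne', add_sub_add_comm]

lemma X_log_sub (n : ℕ) (a b : Fin (2*n+4) → ℝ) (m : ℕ) :
    X n (fun i => Real.log (b i) - Real.log (a i)) m = Real.log (X n b m) - Real.log (X n a m) := by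
  unfold X
  split_ifs <;> simp

lemma reactantMonomialsScale_exp_iff {n : ℕ} {a b : Fin (2*n+4) → ℝ} (ha : ∀ i, 0 < a i)
    (hb : ∀ i, 0 < b i) (t : ℝ) :
    ReactantMonomialsScale n (Real.exp t) a b ↔
      let v := fun i => Real.log (b i) - Real.log (a i)
      X n v 1 + X n v 3 = t ∧ X n v 2 + X n v 4 = t ∧ ∀ m, 5 ≤ m → m ≤ 2*n+4 → X n v m = t := by
  simp only [ReactantMonomialsScale, X_log_sub]
  refine and_congr ?_ (and_congr ?_ (forall₃_congr fun m h5 hm => ?_))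
  · exact mul_eq_exp_mul_mul_iff (X_pos hb le_rfl (by omega)) (X_pos hb (by omega) (by omega))
      (X_pos ha le_rfl (by omega)) (X_pos ha (by omega) (by omega))
  · exact mul_eq_exp_mul_mul_iff (X_pos hb (by omega) (by omega)) (X_pos hb (by omega) (by omega))
      (X_pos ha (by omega) (by omega)) (X_pos ha (by omega) (by omega))
  · exact eq_exp_mul_iff_log_sub_eq (X_pos hb (by omega) hm) (X_pos ha (by omega) hm)

/-- If `a` is a positive steady state, then a positive `b` is a steady state if and only
if `ln b - ln a` lies in the column space of the matrix `B`. -/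
theorem steady_state_iff_log_difference (n : ℕ) (hn : 1 ≤ n) (k l : ℕ → ℝ)
    (hk : ∀ i, 1 ≤ i → i ≤ 2*n+1 → 0 < k i)
    (hl : ∀ i, 1 ≤ i → i ≤ 2*n+1 → 0 < l i)
    (a : Fin (2*n+4) → ℝ) (ha : ∀ i, 0 < a i)
    (hass : (Gamma n).mulVec (Rvec n k l a) = 0)
    (b : Fin (2*n+4) → ℝ) (hb : ∀ i, 0 < b i) :
    (Gamma n).mulVec (Rvec n k l b) = 0 ↔
      (fun i => Real.log (b i) - Real.log (a i)) ∈
        LinearMap.range (Matrix.mulVecLin (Bmat n)) := by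
  rw [Gamma_mulVec_Rvec_eq_zero_iff hn (hk _ (by omega) le_rfl) ha hass hb, mem_range_Bmat_iff]
  exact exists_congr fun t =>
    (Rvec_eq_smul_iff hn hk hl).trans (reactantMonomialsScale_exp_iff ha hb t)

end
end
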